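/- For every countable ordinal α ≥ 2, cof*(conv_α) ≥ 𝔡: any family A ⊆ conv_α such that every B ∈ conv_α is almost contained (modulo finite) in some member of A must have cardinality at least the dominating number 𝔡. -/

import Mathlib

open Set Filter Topology Ordinal

noncomputable section

/-- The derived set of `A`: the set of accumulation (limit) points of `A`. -/
def derivSet {X : Type*} [TopologicalSpace X] (A : Set X) : Set X :=
  {p | p ∈ closure (A \ {p})}

/-- The ordinal space `ω^a + 1 = [0, ω^a]` with the (order) topology. -/
abbrev OrdSpace (a : Ordinal) : Type _ := ↥(Set.Iic (omega0 ^ a))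

/-- The ideal `conv_a` on `ω^a + 1`: sets with finite derived set. -/
def convIdeal (a : Ordinal) : Set (Set (OrdSpace a)) :=
  {A | (derivSet A).Finite}

/-- `I` is an ideal of subsets. -/
structure IsIdeal {S : Type*} (I : Set (Set S)) : Prop where
  empty_mem : ∅ ∈ I
  subset_mem : ∀ {A B : Set S}, A ⊆ B → B ∈ I → A ∈ I
  union_mem : ∀ {A B : Set S}, A ∈ I → B ∈ I → A ∪ B ∈ I

/-- The subsequence of `f` indexed by `A` converges to `x`. -/
def ConvAlong {X : Type*} [TopologicalSpace X] (f : ℕ → X) (A : Set ℕ) (x : X) : Prop :=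
  ∀ U ∈ nhds x, {n ∈ A | f n ∉ U}.Finite

/-- Katětov order: `J ≤_K I`, where `I` lives on `X` and `J` on `Y`. -/
def KatetovLE {X Y : Type*} (J : Set (Set Y)) (I : Set (Set X)) : Prop :=
  ∃ f : X → Y, ∀ A ∈ J, f ⁻¹' A ∈ I

/-- `X ∈ FinBW(I)`: every sequence in `X` has a convergent subsequence indexed
by an `I`-positive set. -/
def InFinBW (I : Set (Set ℕ)) (X : Type*) [TopologicalSpace X] : Prop :=
  ∀ f : ℕ → X, ∃ A : Set ℕ, A ∉ I ∧ ∃ x : X, ConvAlong f A x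

/-- The dominating number `𝔡`. -/
def domNumber : Cardinal.{0} :=
  sInf {c : Cardinal.{0} | ∃ F : Set (ℕ → ℕ), Cardinal.mk F = c ∧
    ∀ g : ℕ → ℕ, ∃ f ∈ F, ∀ᶠ n in atTop, g n ≤ f n}


/-!
For `g : ℕ → ℕ` let `B_g = ⋃ₙ {ω·n + k | k ≤ g n}`. It meets each block `[ω·n, ω·(n+1))` in a
finite set, so its only accumulation point is `ω·ω`, and `B_g ∈ conv_α` as soon as `α ≥ 2`.
Conversely, a set `A ∈ conv_α` meets only finitely many blocks in an infinite set, since each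
such block makes `ω·(n+1)` an accumulation point of `A`. So if `B_g \ A` is finite, then
`g n ≤ max {k | ω·n + k ∈ A}` for almost all `n`: the heights of the members of a cofinal
family form a dominating family.
-/

theorem derivSet_eq_derivedSet {X : Type*} [TopologicalSpace X] (A : Set X) :
    derivSet A = derivedSet A := by
  ext p
  rw [mem_derivedSet, accPt_principal_iff_clusterPt, ← mem_closure_iff_clusterPt]
  rfl

theorem IsOpen.derivedSet_subtype {X : Type*} [TopologicalSpace X] {s : Set X} (hs : IsOpen s)
    (A : Set s) : derivedSet A = (↑) ⁻¹' derivedSet ((↑) '' A : Set X) := by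
  ext p
  rw [mem_preimage, mem_derivedSet, mem_derivedSet,
    ← hs.isOpenEmbedding_subtypeVal.accPt_comap_iff, comap_principal,
    preimage_image_eq _ Subtype.val_injective]

theorem AccPt.infinite_inter_of_mem_nhds {X : Type*} [TopologicalSpace X] [T1Space X]
    {S U : Set X} {x : X} (h : AccPt x (𝓟 S)) (hU : U ∈ 𝓝 x) : (S ∩ U).Infinite := by
  refine Set.Infinite.of_accPt (x := x) ?_
  rw [AccPt, ← inf_principal, ← inf_assoc, inf_right_comm,
    inf_eq_left.2 (nhdsWithin_le_nhds.trans (le_principal_iff.2 hU))]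
  exact h

theorem lift_domNumber_le_mk {ι : Type u} (f : ι → ℕ → ℕ)
    (hf : ∀ g : ℕ → ℕ, ∃ i, ∀ᶠ n in atTop, g n ≤ f i n) :
    Cardinal.lift.{u} domNumber ≤ Cardinal.mk ι := by
  have hdom : domNumber ≤ Cardinal.mk (range f) := by
    refine csInf_le' ⟨range f, rfl, fun g => ?_⟩
    obtain ⟨i, hi⟩ := hf g
    exact ⟨f i, mem_range_self i, hi⟩
  exact (Cardinal.lift_le.2 hdom).trans
    (Cardinal.mk_range_le_lift.trans_eq (Cardinal.lift_uzero _))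

section SuccOrder

variable {α : Type*} [LinearOrder α] [TopologicalSpace α] [OrderTopology α] [SuccOrder α]
  [NoMaxOrder α]

theorem isOpen_Iic_of_succOrder (a : α) : IsOpen (Iic a) := by
  rw [← Order.Iio_succ]
  exact isOpen_Iio

theorem derivedSet_subset_singleton {S : Set α} {o : α} (hS : S ⊆ Iic o)
    (hfin : ∀ c < o, (S ∩ Iic c).Finite) : derivedSet S ⊆ {o} := by
  intro p hp
  rcases lt_trichotomy p o with hpo | rfl | hop
  · exact absurd (hfin p hpo)
      (hp.infinite_inter_of_mem_nhds ((isOpen_Iic_of_succOrder p).mem_nhds le_rfl))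
  · rfl
  · refine absurd ?_ (hp.infinite_inter_of_mem_nhds (Ioi_mem_nhds hop))
    rw [disjoint_iff_inter_eq_empty.1 (Iic_disjoint_Ioi le_rfl |>.mono_left hS)]
    exact finite_empty

end SuccOrder

namespace Ordinal

theorem omega0_mul_add_natCast_lt_omega0_mul_succ (n k : ℕ) :
    ω * n + k < ω * (n + 1) := by
  rw [mul_add_one]
  exact (add_lt_add_iff_left _).2 (natCast_lt_omega0 k)

theorem omega0_mul_succ_lt_omega0_mul_omega0 (n : ℕ) : ω * (n + 1) < ω * ω :=
  mul_lt_mul_of_pos_left (by exact_mod_cast natCast_lt_omega0 (n + 1)) omega0_pos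

theorem omega0_mul_add_natCast_div_omega0 (n k : ℕ) : (ω * n + k) / ω = n := by
  rw [mul_add_div _ omega0_ne_zero, div_eq_zero_of_lt (natCast_lt_omega0 k), add_zero]

def column (S : Set Ordinal) (n : ℕ) : Set ℕ := {k | ω * n + k ∈ S}

theorem accPt_omega0_mul_succ_of_infinite_column {S : Set Ordinal} {n : ℕ}
    (h : (column S n).Infinite) : AccPt (ω * (n + 1)) (𝓟 S) := by
  refine SuccOrder.accPt_principal.2 ⟨?_, fun b hb => ?_⟩
  · exact not_isMin_iff_ne_bot.2 (mul_pos omega0_pos (by exact_mod_cast n.succ_pos)).ne'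
  · rw [mul_add_one] at hb
    obtain ⟨c, hc, hbc⟩ := (lt_add_iff_of_isSuccLimit isSuccLimit_omega0).1 hb
    obtain ⟨j, rfl⟩ := lt_omega0.1 hc
    obtain ⟨k, hkS, hjk⟩ := h.exists_gt j
    refine ⟨ω * n + k, hkS, hbc.trans_le ?_, omega0_mul_add_natCast_lt_omega0_mul_succ n k⟩
    exact (add_le_add_iff_left _).2 (by exact_mod_cast hjk.le)

theorem finite_setOf_infinite_column {S : Set Ordinal} (hS : (derivedSet S).Finite) :
    {n : ℕ | (column S n).Infinite}.Finite := by
  have hinj : Function.Injective fun n : ℕ => ω * (n + 1) := fun n m h => by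
    simpa using mul_left_cancel₀ omega0_ne_zero h
  exact (hS.preimage hinj.injOn).subset fun n hn => accPt_omega0_mul_succ_of_infinite_column hn

theorem eventually_le_sSup_column {S : Set Ordinal} {g : ℕ → ℕ}
    (hg : {n | g n ∉ column S n}.Finite) (hS : {n : ℕ | (column S n).Infinite}.Finite) :
    ∀ᶠ n in atTop, g n ≤ sSup (column S n) := by
  rw [← Nat.cofinite_eq_atTop]
  filter_upwards [(hg.union hS).compl_mem_cofinite] with n hn
  simp only [mem_compl_iff, mem_union, mem_ofPred_eq, not_or, not_not, Set.not_infinite] at hn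
  exact le_csSup hn.2.bddAbove hn.1

def belowGraph (g : ℕ → ℕ) : Set Ordinal :=
  ⋃ n : ℕ, (fun k : ℕ => ω * n + k) '' Iic (g n)

theorem belowGraph_subset_Iio (g : ℕ → ℕ) : belowGraph g ⊆ Iio (ω * ω) := by
  simp only [belowGraph, iUnion_subset_iff, image_subset_iff]
  exact fun n k _ => (omega0_mul_add_natCast_lt_omega0_mul_succ n k).trans
    (omega0_mul_succ_lt_omega0_mul_omega0 n)

theorem finite_belowGraph_inter_Iic (g : ℕ → ℕ) {c : Ordinal} (hc : c < ω * ω) :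
    (belowGraph g ∩ Iic c).Finite := by
  obtain ⟨m, hm, hcm⟩ := (lt_mul_iff_of_isSuccLimit isSuccLimit_omega0).1 hc
  obtain ⟨m, rfl⟩ := lt_omega0.1 hm
  refine ((finite_Iio m).biUnion fun n _ => (finite_Iic (g n)).image
    fun k : ℕ => ω * n + k).subset ?_
  rintro _ ⟨hx, hxc⟩
  obtain ⟨n, k, hk, rfl⟩ := mem_iUnion.1 hx
  refine mem_biUnion (x := n) ?_ ⟨k, hk, rfl⟩
  by_contra! hmn
  rw [mem_Iio, not_lt] at hmn
  exact (hcm.trans_le' hxc).not_ge ((mul_le_mul_right (by exact_mod_cast hmn) _).trans le_self_add)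

theorem derivedSet_belowGraph_subset (g : ℕ → ℕ) : derivedSet (belowGraph g) ⊆ {ω * ω} :=
  derivedSet_subset_singleton ((belowGraph_subset_Iio g).trans Iio_subset_Iic_self)
    fun _ => finite_belowGraph_inter_Iic g

theorem finite_setOf_notMem_column {S : Set Ordinal} {g : ℕ → ℕ}
    (h : (belowGraph g \ S).Finite) : {n | g n ∉ column S n}.Finite := by
  have hinj : Function.Injective fun n : ℕ => ω * n + g n := fun n m h => by
    have := congrArg (· / ω) h
    simp only [omega0_mul_add_natCast_div_omega0] at this
    exact_mod_cast this
  refine (h.preimage hinj.injOn).subset fun n hn => ⟨?_, hn⟩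
  exact mem_iUnion.2 ⟨n, g n, self_mem_Iic, rfl⟩

end Ordinal

open Ordinal

theorem mem_convIdeal_iff {a : Ordinal} {A : Set (OrdSpace a)} :
    A ∈ convIdeal a ↔ (derivedSet ((↑) '' A : Set Ordinal)).Finite := by
  have hrange : derivedSet ((↑) '' A : Set Ordinal) ⊆ Iic (ω ^ a) :=
    (derivedSet_subset_closure _).trans
      (closure_minimal (Subtype.coe_image_subset _ _) isClosed_Iic)
  rw [convIdeal, mem_ofPred_eq, derivSet_eq_derivedSet,
    (isOpen_Iic_of_succOrder _).derivedSet_subtype]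
  refine ⟨fun h => ?_, fun h => h.preimage Subtype.val_injective.injOn⟩
  rw [← image_preimage_eq_of_subset (hrange.trans_eq Subtype.range_coe.symm)]
  exact h.image _

theorem stmt19_general (a : Ordinal.{0}) (ha : 2 ≤ a)
    (𝒜 : Set (Set (OrdSpace a))) (h𝒜 : ∀ A ∈ 𝒜, A ∈ convIdeal a)
    (hcof : ∀ B ∈ convIdeal a, ∃ A ∈ 𝒜, (B \ A).Finite) :
    Cardinal.lift.{1} domNumber ≤ Cardinal.mk 𝒜 := by
  have hsq : ω * ω ≤ ω ^ a := by
    rw [← pow_two, ← opow_natCast, Nat.cast_ofNat]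
    exact opow_le_opow_right omega0_pos ha
  have hB : ∀ g, belowGraph g ⊆ range ((↑) : OrdSpace a → Ordinal) := fun g => by
    rw [Subtype.range_coe]
    exact (belowGraph_subset_Iio g).trans (Iio_subset_Iic_self.trans (Iic_subset_Iic.2 hsq))
  refine lift_domNumber_le_mk
    (fun (A : 𝒜) n => sSup (column ((↑) '' (A : Set (OrdSpace a))) n)) fun g => ?_
  obtain ⟨A, hA, hBA⟩ := hcof _ <| mem_convIdeal_iff.2 <| (finite_singleton _).subset <|
    (derivedSet_mono _ _ (image_preimage_subset _ _)).trans (derivedSet_belowGraph_subset g)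
  refine ⟨⟨A, hA⟩, eventually_le_sSup_column (finite_setOf_notMem_column ?_)
    (finite_setOf_infinite_column (mem_convIdeal_iff.1 (h𝒜 A hA)))⟩
  rw [← image_preimage_eq_of_subset (hB g), ← image_sdiff Subtype.val_injective]
  exact hBA.image _

/-- `cof*(conv_α) ≥ 𝔡`: every family cofinal in `conv_α` with respect to
almost-containment has cardinality at least the dominating number. -/
theorem stmt19 (a : Ordinal.{0}) (ha : 2 ≤ a) (hac : a.card ≤ Cardinal.aleph0)
    (𝒜 : Set (Set (OrdSpace a))) (h𝒜 : ∀ A ∈ 𝒜, A ∈ convIdeal a)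
    (hcof : ∀ B ∈ convIdeal a, ∃ A ∈ 𝒜, (B \ A).Finite) :
    Cardinal.lift.{1} domNumber ≤ Cardinal.mk 𝒜 :=
  stmt19_general a ha 𝒜 h𝒜 hcof
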